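/- arXiv:1904.02025 — 4 statements merged into one kernel-verified Lean document; each statement's English description precedes it below -/
import Mathlib

section
/- If f is holomorphic of weight k with Fourier expansion f(z) = ∑_{n≥1} a_f(n) e(nz) satisfying f|_k γ = χ(γ) f for all γ ∈ Γ₀(N), and σ⁻¹ = [[d,-b],[-q,a]] ∈ SL₂(ℤ), then (f|_k σ⁻¹)(z + δ) = (f|_k σ⁻¹)(z) where δ = [Mq, q², N]/q² and M is the conductor of χ. -/
/-!
Write `g = σ⁻¹` and `T = [[1, δ], [0, 1]]`. The conjugate `γ = g T g⁻¹` equals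
`[[1 + dqδ, d²δ], [-q²δ, 1 - dqδ]]`; by the choice of `δ` it lies in `Γ₀(N)` and its lower right
entry is `≡ 1 (mod M)`, so `f|γ = f`. Hence `(f|g)(z + δ) = f|(gT)(z) = f|(γg)(z) = (f|g)(z)`.
On all of `ℂ` the slash operator is only multiplicative where the cocycle `cz + d` of `g` does
not vanish; at the one point where it does, run the same argument backwards from `z + δ` with
`T⁻¹`.
-/

open Complex

/-- The weight `k` slash operator on functions `ℂ → ℂ`, for integer matrices of
determinant one: `(f|_k g)(z) = (cz+d)^{-k} f((az+b)/(cz+d))`. -/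
noncomputable def slash (k : ℤ) (g : Matrix (Fin 2) (Fin 2) ℤ) (f : ℂ → ℂ) : ℂ → ℂ :=
  fun z => ((g 1 0 : ℂ) * z + (g 1 1 : ℂ)) ^ (-k) *
    f (((g 0 0 : ℂ) * z + (g 0 1 : ℂ)) / ((g 1 0 : ℂ) * z + (g 1 1 : ℂ)))

open Matrix

section SlashAction

variable (k : ℤ) (f : ℂ → ℂ)

lemma slash_mul_apply (A B : Matrix (Fin 2) (Fin 2) ℤ) {z : ℂ}
    (hz : (B 1 0 : ℂ) * z + B 1 1 ≠ 0) :
    slash k (A * B) f z = slash k B (slash k A f) z := by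
  set w : ℂ := ((B 0 0 : ℂ) * z + B 0 1) / ((B 1 0 : ℂ) * z + B 1 1)
  have hden : ((A * B) 1 0 : ℂ) * z + (A * B) 1 1 =
      ((A 1 0 : ℂ) * w + A 1 1) * ((B 1 0 : ℂ) * z + B 1 1) := by
    simp only [w, mul_apply, Fin.sum_univ_two, Int.cast_add, Int.cast_mul]
    field_simp
    ring
  have hnum : ((A * B) 0 0 : ℂ) * z + (A * B) 0 1 =
      ((A 0 0 : ℂ) * w + A 0 1) * ((B 1 0 : ℂ) * z + B 1 1) := by
    simp only [w, mul_apply, Fin.sum_univ_two, Int.cast_add, Int.cast_mul]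
    field_simp
    ring
  simp only [slash]
  rw [hden, hnum, mul_div_mul_right _ _ hz, mul_zpow]
  ring

lemma slash_translation_apply (h : ℤ) (z : ℂ) : slash k !![1, h; 0, 1] f z = f (z + h) := by
  simp [slash]

lemma slash_add_of_mul_eq {γ g : Matrix (Fin 2) (Fin 2) ℤ} {h : ℤ} (hγ : slash k γ f = f)
    (hconj : γ * g = g * !![1, h; 0, 1]) {z : ℂ} (hz : (g 1 0 : ℂ) * z + g 1 1 ≠ 0) :
    slash k g f (z + h) = slash k g f z :=
  calc slash k g f (z + h) = slash k !![1, h; 0, 1] (slash k g f) z :=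
        (slash_translation_apply k _ h z).symm
    _ = slash k (g * !![1, h; 0, 1]) f z := (slash_mul_apply k f _ _ (by simp)).symm
    _ = slash k g (slash k γ f) z := by rw [← hconj, slash_mul_apply k f _ _ hz]
    _ = slash k g f z := by rw [hγ]

end SlashAction

/-- `g [[1, h], [0, 1]] g⁻¹` for `g = [[d, -b], [-q, a]]` of determinant one. -/
def conjTranslation (d q h : ℤ) : Matrix (Fin 2) (Fin 2) ℤ :=
  !![1 + d * q * h, d ^ 2 * h; -(q ^ 2 * h), 1 - d * q * h]

lemma det_conjTranslation (d q h : ℤ) : (conjTranslation d q h).det = 1 := by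
  rw [conjTranslation, det_fin_two_of]
  ring

lemma conjTranslation_mul {a b d q : ℤ} (hdet : d * a - b * q = 1) (h : ℤ) :
    conjTranslation d q h * !![d, -b; -q, a] = !![d, -b; -q, a] * !![1, h; 0, 1] := by
  ext i j
  fin_cases i <;> fin_cases j <;> simp only [conjTranslation,
    mul_apply, Fin.sum_univ_two, of_apply, cons_val', cons_val_fin_one, cons_val_zero, cons_val_one,
    Fin.isValue, Fin.zero_eta, Fin.mk_one]
  · ring
  · linear_combination (d * h) * hdet
  · ring
  · linear_combination (-(q * h)) * hdet

lemma slash_conjTranslation_eq {N M : ℕ} {k : ℤ} {χ : DirichletCharacter ℂ M} {f : ℂ → ℂ}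
    (hmod : ∀ g : Matrix (Fin 2) (Fin 2) ℤ, g.det = 1 → (N : ℤ) ∣ g 1 0 →
      slash k g f = fun z => χ ((g 1 1 : ℤ) : ZMod M) * f z)
    {d q h : ℤ} (hN : (N : ℤ) ∣ q ^ 2 * h) (hM : (M : ℤ) ∣ q * h) :
    slash k (conjTranslation d q h) f = f := by
  have hlow : (N : ℤ) ∣ conjTranslation d q h 1 0 := by simpa [conjTranslation] using hN
  have hcong : ((conjTranslation d q h 1 1 : ℤ) : ZMod M) = 1 := by
    have hqh : ((q * h : ℤ) : ZMod M) = 0 := (ZMod.intCast_zmod_eq_zero_iff_dvd _ _).mpr hM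
    simp only [conjTranslation, of_apply, cons_val', cons_val_one, empty_val',
      cons_val_fin_one]
    push_cast at hqh ⊢
    rw [mul_assoc, hqh, mul_zero, sub_zero]
  rw [hmod _ (det_conjTranslation d q h) hlow, hcong, map_one]
  simp

def extendedWidth (M N q : ℕ) : ℕ := Nat.lcm (M * q) (Nat.lcm (q ^ 2) N) / q ^ 2

lemma sq_mul_extendedWidth (M N q : ℕ) :
    q ^ 2 * extendedWidth M N q = Nat.lcm (M * q) (Nat.lcm (q ^ 2) N) :=
  Nat.mul_div_cancel' ((Nat.dvd_lcm_left _ _).trans (Nat.dvd_lcm_right _ _))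

lemma dvd_sq_mul_extendedWidth (M N q : ℕ) : N ∣ q ^ 2 * extendedWidth M N q := by
  rw [sq_mul_extendedWidth]
  exact (Nat.dvd_lcm_right _ _).trans (Nat.dvd_lcm_right _ _)

lemma dvd_mul_extendedWidth (M N : ℕ) {q : ℕ} (hq : 0 < q) : M ∣ q * extendedWidth M N q := by
  refine Nat.dvd_of_mul_dvd_mul_left hq ?_
  rw [← mul_assoc, ← sq, sq_mul_extendedWidth, mul_comm q M]
  exact Nat.dvd_lcm_left _ _

theorem slash_periodic_general (N M : ℕ) (k : ℤ)
    (χ : DirichletCharacter ℂ M) (f : ℂ → ℂ)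
    (hmod : ∀ g : Matrix (Fin 2) (Fin 2) ℤ, g.det = 1 → (N : ℤ) ∣ g 1 0 →
      slash k g f = fun z => χ ((g 1 1 : ℤ) : ZMod M) * f z)
    (a b d : ℤ) (q : ℕ) (hq : 0 < q)
    (hdet : d * a - b * (q : ℤ) = 1) :
    ∀ z : ℂ,
      slash k !![d, -b; -(q : ℤ), a] f
          (z + ((Nat.lcm (M * q) (Nat.lcm (q ^ 2) N) / q ^ 2 : ℕ) : ℂ))
        = slash k !![d, -b; -(q : ℤ), a] f z := by
  intro z
  show slash k _ f (z + (extendedWidth M N q : ℂ)) = _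
  set δ := extendedWidth M N q
  have hN : (N : ℤ) ∣ (q : ℤ) ^ 2 * δ := by exact_mod_cast dvd_sq_mul_extendedWidth M N q
  have hM : (M : ℤ) ∣ (q : ℤ) * δ := by exact_mod_cast dvd_mul_extendedWidth M N hq
  rcases eq_or_ne (-(q : ℂ) * z + a) 0 with hz | hz
  · rcases eq_or_ne δ 0 with hδ | hδ
    · simp [hδ]
    have hzδ : -(q : ℂ) * (z + δ) + a ≠ 0 := by
      rw [show -(q : ℂ) * (z + δ) + a = -(q * δ) by linear_combination hz]
      exact neg_ne_zero.mpr (mul_ne_zero (by exact_mod_cast hq.ne') (by exact_mod_cast hδ))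
    have hback := slash_add_of_mul_eq k f
      (slash_conjTranslation_eq hmod (h := -δ) (by simpa using hN) (by simpa using hM))
      (conjTranslation_mul hdet _) (z := z + δ) (by simpa using hzδ)
    simpa using hback.symm
  · have hforth := slash_add_of_mul_eq k f (slash_conjTranslation_eq hmod hN hM)
      (conjTranslation_mul hdet _) (by simpa using hz)
    simpa using hforth

/-- If `f` is a holomorphic modular form of weight `k`, level `N` and nebentypus `χ`
of conductor `M ∣ N`, and `σ⁻¹ = [[d,-b],[-q,a]] ∈ SL₂(ℤ)` with `q ∣ N`, then
`(f|_k σ⁻¹)(z + δ) = (f|_k σ⁻¹)(z)` where `δ = [Mq, q², N]/q²` is the extended width. -/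
theorem slash_periodic (N M : ℕ) (k : ℤ) (hM : 0 < M) (hMN : M ∣ N)
    (χ : DirichletCharacter ℂ M) (f : ℂ → ℂ)
    (hmod : ∀ g : Matrix (Fin 2) (Fin 2) ℤ, g.det = 1 → (N : ℤ) ∣ g 1 0 →
      slash k g f = fun z => χ ((g 1 1 : ℤ) : ZMod M) * f z)
    (a b d : ℤ) (q : ℕ) (hq : 0 < q) (hqN : q ∣ N)
    (hdet : d * a - b * (q : ℤ) = 1) :
    ∀ z : ℂ,
      slash k !![d, -b; -(q : ℤ), a] f
          (z + ((Nat.lcm (M * q) (Nat.lcm (q ^ 2) N) / q ^ 2 : ℕ) : ℂ))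
        = slash k !![d, -b; -(q : ℤ), a] f z :=
  slash_periodic_general N M k χ f hmod a b d q hq hdet
end

section
/- For integers t, l with 0 ≤ l ≤ n and v ∈ ℤ_p^×, one has the matrix identity g_{t,l,v} = n(-v^{-1} p^{l+t}) · z(v p^{-l}) · g_{t+2l-n, n-l, -v} · [[1, 0],[0, v^{-2}]] · w_n, where w_n = z(p^n)·a(p^{-n})·w and g_{t,l,v} = a(p^t)·w·n(v p^{-l}). -/
open Matrix

theorem diag_mul_weyl_mul_unipotent {R : Type*} [Ring R] (y x : R) :
    !![y, 0; 0, 1] * !![0, 1; -1, 0] * !![1, x; 0, 1] = !![0, y; -1, -x] := by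
  simp

theorem scalar_zpow_mul_diag_mul_weyl {K : Type*} [DivisionRing K] {q : K} (hq : q ≠ 0) (n : ℤ) :
    scalar (Fin 2) (q ^ n) * !![q ^ (-n), 0; 0, 1] * !![0, 1; -1, 0] = !![0, 1; -q ^ n, 0] := by
  rw [scalar_apply, diagonal_fin_two, _root_.zpow_neg]
  simp [zpow_ne_zero n hq]

theorem diag_mul_weyl_mul_unipotent_eq_mul_atkinLehner {K : Type*} [Field K] {q u : K}
    (hq : q ≠ 0) (hu : u ≠ 0) (t l n : ℤ) :
    !![q ^ t, 0; 0, 1] * !![0, 1; -1, 0] * !![1, u * q ^ (-l); 0, 1]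
      = !![1, -(u⁻¹ * q ^ (l + t)); 0, 1] * scalar (Fin 2) (u * q ^ (-l)) *
        (!![q ^ (t + 2 * l - n), 0; 0, 1] * !![0, 1; -1, 0] * !![1, -u * q ^ (-(n - l)); 0, 1]) *
        !![1, 0; 0, u⁻¹ ^ 2] *
        (scalar (Fin 2) (q ^ n) * !![q ^ (-n), 0; 0, 1] * !![0, 1; -1, 0]) := by
  rw [diag_mul_weyl_mul_unipotent, diag_mul_weyl_mul_unipotent, scalar_zpow_mul_diag_mul_weyl hq,
    scalar_apply, diagonal_fin_two]
  simp only [mul_fin_two, two_mul, zpow_add₀ hq, zpow_sub₀ hq, _root_.zpow_neg]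
  ext i j
  fin_cases i <;> fin_cases j <;> dsimp <;> field_simp <;> ring

theorem atkin_lehner_matrix_identity_general (p : ℕ) [Fact p.Prime] (t l n : ℤ)
    (v : ℤ_[p]ˣ) :
    !![(p : ℚ_[p]) ^ t, 0; 0, 1] * !![0, 1; -1, 0] *
        !![1, ((v : ℤ_[p]) : ℚ_[p]) * (p : ℚ_[p]) ^ (-l); 0, 1]
      = !![1, -((((v⁻¹ : ℤ_[p]ˣ) : ℤ_[p]) : ℚ_[p]) * (p : ℚ_[p]) ^ (l + t)); 0, 1] *
        Matrix.scalar (Fin 2) (((v : ℤ_[p]) : ℚ_[p]) * (p : ℚ_[p]) ^ (-l)) *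
        (!![(p : ℚ_[p]) ^ (t + 2 * l - n), 0; 0, 1] * !![0, 1; -1, 0] *
          !![1, -((v : ℤ_[p]) : ℚ_[p]) * (p : ℚ_[p]) ^ (-(n - l)); 0, 1]) *
        !![1, 0; 0, (((v⁻¹ : ℤ_[p]ˣ) : ℤ_[p]) : ℚ_[p]) ^ 2] *
        (Matrix.scalar (Fin 2) ((p : ℚ_[p]) ^ n) * !![(p : ℚ_[p]) ^ (-n), 0; 0, 1] *
          !![0, 1; -1, 0]) := by
  have hv : (((v⁻¹ : ℤ_[p]ˣ) : ℤ_[p]) : ℚ_[p]) = ((v : ℤ_[p]) : ℚ_[p])⁻¹ :=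
    map_units_inv PadicInt.Coe.ringHom v
  rw [hv]
  exact diag_mul_weyl_mul_unipotent_eq_mul_atkinLehner
    (Nat.cast_ne_zero.mpr (Fact.out : p.Prime).ne_zero) (PadicInt.coe_ne_zero.mpr v.ne_zero) t l n

/-- For integers `t, l` with `0 ≤ l ≤ n` and `v ∈ ℤ_pˣ`, the matrix identity
`g_{t,l,v} = n(-v⁻¹ p^{l+t}) · z(v p^{-l}) · g_{t+2l-n, n-l, -v} · [[1,0],[0,v⁻²]] · w_n`
holds over `ℚ_p`, where `w_n = z(p^n)·a(p^{-n})·w` and `g_{t,l,v} = a(p^t)·w·n(v p^{-l})`. -/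
theorem atkin_lehner_matrix_identity (p : ℕ) [Fact p.Prime] (t l n : ℤ)
    (hl : 0 ≤ l) (hln : l ≤ n) (v : ℤ_[p]ˣ) :
    !![(p : ℚ_[p]) ^ t, 0; 0, 1] * !![0, 1; -1, 0] *
        !![1, ((v : ℤ_[p]) : ℚ_[p]) * (p : ℚ_[p]) ^ (-l); 0, 1]
      = !![1, -((((v⁻¹ : ℤ_[p]ˣ) : ℤ_[p]) : ℚ_[p]) * (p : ℚ_[p]) ^ (l + t)); 0, 1] *
        Matrix.scalar (Fin 2) (((v : ℤ_[p]) : ℚ_[p]) * (p : ℚ_[p]) ^ (-l)) *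
        (!![(p : ℚ_[p]) ^ (t + 2 * l - n), 0; 0, 1] * !![0, 1; -1, 0] *
          !![1, -((v : ℤ_[p]) : ℚ_[p]) * (p : ℚ_[p]) ^ (-(n - l)); 0, 1]) *
        !![1, 0; 0, (((v⁻¹ : ℤ_[p]ˣ) : ℤ_[p]) : ℚ_[p]) ^ 2] *
        (Matrix.scalar (Fin 2) ((p : ℚ_[p]) ^ n) * !![(p : ℚ_[p]) ^ (-n), 0; 0, 1] *
          !![0, 1; -1, 0]) :=
  atkin_lehner_matrix_identity_general p t l n v
end

section
/- For a, b, t, l ∈ ℤ, ξ ∈ ℚ^×, the rational matrix identity a(ξ)·w·n(-a/b)·a(δ⁻¹)·σ = z([δ,b]⁻¹)·a(ξ[δ,b]·b/(δ,b))·n(ā/(b/(δ,b)))·δ'·σ holds, where δ' is the SL₂(ℤ) matrix [[ā, (1-uā)/c],[-c, u]] with u = aδ/(δ,b), c = b/(δ,b), ā·u ≡ 1 mod c — specialized to σ = Id: a(ξ)·w·n(-a/b) = z(1/[δ,b])·a(ξ[δ,b]b/(δ,b))·n(ā·(δ,b)/b)·δ'. -/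
open Matrix

/-! Both sides equal `!![0, ξ; -δ⁻¹, a/b]`. On the right, `n(ā/c)` clears the top-left entry
of `δ'` and, because `c ∣ 1 - uā`, turns its top-right entry into `1/c`; the diagonal and
scalar factors then rescale by `ξ[δ,b]c` and `1/[δ,b]`, and `(δ,b)·[δ,b] = δb` (for
`δ, b > 0`) matches the entries. -/

theorem Int.gcd_mul_lcm_of_nonneg {m n : ℤ} (h : 0 ≤ m * n) :
    (m.gcd n : ℤ) * m.lcm n = m * n := by
  rw [← Nat.cast_mul, Int.gcd_mul_lcm, ← Int.natAbs_mul, Int.natAbs_of_nonneg h]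

theorem diag_mul_weyl_mul_unipotent_mul_diag {R : Type*} [CommRing R] (ξ t d : R) :
    !![ξ, 0; 0, 1] * !![0, 1; -1, 0] * !![1, t; 0, 1] * !![d, 0; 0, 1]
      = !![0, ξ; -d, -t] := by
  simp only [mul_fin_two]
  congr <;> ring

section Field

variable {K : Type*} [Field K]

theorem unipotent_mul_eq_of_mul_eq {c q u x : K} (hc : c ≠ 0) (hq : c * q = 1 - u * x) :
    !![1, x / c; 0, 1] * !![x, q; -c, u] = !![0, c⁻¹; -c, u] := by
  have top_left : 1 * x + x / c * -c = 0 := by field_simp; ring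
  have top_right : 1 * q + x / c * u = c⁻¹ := by field_simp; linear_combination hq
  rw [mul_fin_two, top_left, top_right]
  simp

theorem scalar_mul_diag_mul_unipotent_mul_eq_of_mul_eq {s y c q u x : K} (hc : c ≠ 0)
    (hq : c * q = 1 - u * x) :
    scalar (Fin 2) s * !![y, 0; 0, 1] * !![1, x / c; 0, 1] * !![x, q; -c, u]
      = !![0, s * y / c; -(s * c), s * u] := by
  rw [mul_assoc, unipotent_mul_eq_of_mul_eq hc hq, scalar_apply, diagonal_fin_two]
  simp only [mul_fin_two]
  congr <;> ring

end Field

theorem voronoi_matrix_identity_general (a b δ abar : ℤ)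
    (hb : 0 < b) (hδ : 0 < δ) (ξ : ℚ)
    (hinv : (b / (Int.gcd δ b : ℤ)) ∣ 1 - (a * δ / (Int.gcd δ b : ℤ)) * abar) :
    !![ξ, 0; 0, 1] * !![0, 1; -1, 0] * !![1, -(a : ℚ) / (b : ℚ); 0, 1] *
        !![((δ : ℚ))⁻¹, 0; 0, 1]
      = Matrix.scalar (Fin 2) ((Int.lcm δ b : ℚ))⁻¹ *
        !![ξ * (Int.lcm δ b : ℚ) * (b : ℚ) / (Int.gcd δ b : ℚ), 0; 0, 1] *
        !![1, (abar : ℚ) * (Int.gcd δ b : ℚ) / (b : ℚ); 0, 1] *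
        !![(abar : ℚ),
           (((1 - (a * δ / (Int.gcd δ b : ℤ)) * abar) / (b / (Int.gcd δ b : ℤ)) : ℤ) : ℚ);
           -((b / (Int.gcd δ b : ℤ) : ℤ) : ℚ), ((a * δ / (Int.gcd δ b : ℤ) : ℤ) : ℚ)] := by
  set g := Int.gcd δ b
  have hg : (g : ℚ) ≠ 0 := by positivity
  have hL : (Int.lcm δ b : ℚ) = δ * b / g := by
    rw [eq_div_iff hg, mul_comm]
    exact_mod_cast Int.gcd_mul_lcm_of_nonneg (mul_pos hδ hb).le
  have hc : ((b / (g : ℤ) : ℤ) : ℚ) = b / g := by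
    rw [Int.cast_div_charZero (Int.gcd_dvd_right δ b), Int.cast_natCast]
  have hu : ((a * δ / (g : ℤ) : ℤ) : ℚ) = a * δ / g := by
    rw [Int.cast_div_charZero ((Int.gcd_dvd_left δ b).mul_left a), Int.cast_mul,
      Int.cast_natCast]
  have hc0 : ((b / (g : ℤ) : ℤ) : ℚ) ≠ 0 := by
    rw [hc]; exact div_ne_zero (by exact_mod_cast hb.ne') hg
  have hq : ((b / (g : ℤ) : ℤ) : ℚ) * (((1 - (a * δ / (g : ℤ)) * abar) / (b / (g : ℤ)) : ℤ) : ℚ)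
      = 1 - ((a * δ / (g : ℤ) : ℤ) : ℚ) * abar := by
    exact_mod_cast Int.mul_ediv_cancel' hinv
  rw [diag_mul_weyl_mul_unipotent_mul_diag,
    show (abar : ℚ) * g / b = abar / ((b / (g : ℤ) : ℤ) : ℚ) by rw [hc, div_div_eq_mul_div],
    scalar_mul_diag_mul_unipotent_mul_eq_of_mul_eq hc0 hq, hc, hu, hL]
  simp only [EmbeddingLike.apply_eq_iff_eq, vecCons_inj, and_true]
  refine ⟨⟨trivial, ?_⟩, ?_, ?_⟩ <;> field_simp

/-- Rational matrix identity underlying the Vorono\"i formula (specialized to `σ = Id`):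
`a(ξ)·w·n(-a/b)·a(δ⁻¹) = z(1/[δ,b])·a(ξ[δ,b]b/(δ,b))·n(ā(δ,b)/b)·δ'`, where
`δ' = [[ā, (1-uā)/c],[-c, u]]` with `u = aδ/(δ,b)`, `c = b/(δ,b)` and `u·ā ≡ 1 mod c`. -/
theorem voronoi_matrix_identity (a b δ abar : ℤ) (hab : IsCoprime a b)
    (hb : 0 < b) (hδ : 0 < δ) (ξ : ℚ) (hξ : ξ ≠ 0)
    (hinv : (b / (Int.gcd δ b : ℤ)) ∣ 1 - (a * δ / (Int.gcd δ b : ℤ)) * abar) :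
    !![ξ, 0; 0, 1] * !![0, 1; -1, 0] * !![1, -(a : ℚ) / (b : ℚ); 0, 1] *
        !![((δ : ℚ))⁻¹, 0; 0, 1]
      = Matrix.scalar (Fin 2) ((Int.lcm δ b : ℚ))⁻¹ *
        !![ξ * (Int.lcm δ b : ℚ) * (b : ℚ) / (Int.gcd δ b : ℚ), 0; 0, 1] *
        !![1, (abar : ℚ) * (Int.gcd δ b : ℚ) / (b : ℚ); 0, 1] *
        !![(abar : ℚ),
           (((1 - (a * δ / (Int.gcd δ b : ℤ)) * abar) / (b / (Int.gcd δ b : ℤ)) : ℤ) : ℚ);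
           -((b / (Int.gcd δ b : ℤ) : ℤ) : ℚ), ((a * δ / (Int.gcd δ b : ℤ) : ℤ) : ℚ)] :=
  voronoi_matrix_identity_general a b δ abar hb hδ ξ hinv
end

section
/- For l ≥ 1 and v ∈ ℤ_p^×, suppose W: GL₂(ℚ_p) → ℂ satisfies W(n(x)g) = ψ_p(x)W(g) for x ∈ ℚ_p, W(z(λ)g) = ω(λ)W(g) for λ ∈ ℚ_p^×, and W(gk) = W(g) for k ∈ K with K containing [[v⁻²,0],[v⁻¹p^l,1]] (e.g. l ≥ v_p of the level). Then W(g_{t,l,v}) = ψ_p(-v⁻¹p^{t+l})·ω(-v p^{-l})·W(a(p^{t+2l})). -/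
open Matrix

/-! The matrix `g = a(s) w n(u q⁻¹)` factors as `z(-u q⁻¹) n(-u⁻¹ s q) a(s q²) k` with
`k = [[u⁻², 0], [u⁻¹ q, 1]]`; for `s = p^t`, `q = p^l` and `u = v` the factor `k` is the matrix
under which `W` is right invariant, so the transformation laws of `W` under the centre and under
`n(x)` give the value of `W g` directly. -/

theorem diag_mul_weyl_mul_upper_eq_scalar_mul_upper_mul_diag_mul_lower {K : Type*} [Field K]
    {u q : K} (hu : u ≠ 0) (hq : q ≠ 0) (s : K) :
    !![s, 0; 0, 1] * !![0, 1; -1, 0] * !![1, u * q⁻¹; 0, 1]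
      = scalar (Fin 2) (-(u * q⁻¹)) *
        (!![1, -u⁻¹ * (s * q); 0, 1] * (!![s * q ^ 2, 0; 0, 1] * !![u⁻¹ ^ 2, 0; u⁻¹ * q, 1])) := by
  rw [scalar_apply, ← smul_eq_diagonal_mul]
  simp only [mul_fin_two, smul_of, smul_cons, smul_empty, smul_eq_mul]
  ext i j
  fin_cases i <;> fin_cases j <;> simp [field]

theorem PadicInt.coe_units_inv {p : ℕ} [Fact p.Prime] (v : ℤ_[p]ˣ) :
    (((v⁻¹ : ℤ_[p]ˣ) : ℤ_[p]) : ℚ_[p]) = ((v : ℤ_[p]) : ℚ_[p])⁻¹ :=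
  map_units_inv PadicInt.Coe.ringHom v

theorem whittaker_value_general (p : ℕ) [Fact p.Prime] (t l : ℤ) (v : ℤ_[p]ˣ)
    (W : Matrix (Fin 2) (Fin 2) ℚ_[p] → ℂ) (ψ : ℚ_[p] → ℂ) (ω : ℚ_[p] → ℂ)
    (hN : ∀ (x : ℚ_[p]) (g : Matrix (Fin 2) (Fin 2) ℚ_[p]),
      W (!![1, x; 0, 1] * g) = ψ x * W g)
    (hZ : ∀ (lam : ℚ_[p]) (g : Matrix (Fin 2) (Fin 2) ℚ_[p]), lam ≠ 0 →
      W (Matrix.scalar (Fin 2) lam * g) = ω lam * W g)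
    (hK : ∀ g : Matrix (Fin 2) (Fin 2) ℚ_[p],
      W (g * !![(((v⁻¹ : ℤ_[p]ˣ) : ℤ_[p]) : ℚ_[p]) ^ 2, 0;
                (((v⁻¹ : ℤ_[p]ˣ) : ℤ_[p]) : ℚ_[p]) * (p : ℚ_[p]) ^ l, 1]) = W g) :
    W (!![(p : ℚ_[p]) ^ t, 0; 0, 1] * !![0, 1; -1, 0] *
        !![1, ((v : ℤ_[p]) : ℚ_[p]) * (p : ℚ_[p]) ^ (-l); 0, 1])
      = ψ (-(((v⁻¹ : ℤ_[p]ˣ) : ℤ_[p]) : ℚ_[p]) * (p : ℚ_[p]) ^ (t + l)) *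
        (ω (-(((v : ℤ_[p]) : ℚ_[p]) * (p : ℚ_[p]) ^ (-l))) *
          W !![(p : ℚ_[p]) ^ (t + 2 * l), 0; 0, 1]) := by
  have hp : (p : ℚ_[p]) ≠ 0 := Nat.cast_ne_zero.mpr (Fact.out : p.Prime).ne_zero
  have hv : ((v : ℤ_[p]) : ℚ_[p]) ≠ 0 := PadicInt.coe_ne_zero.mpr v.ne_zero
  have hq : (p : ℚ_[p]) ^ l ≠ 0 := zpow_ne_zero l hp
  have hpow_add : (p : ℚ_[p]) ^ (t + l) = p ^ t * p ^ l := zpow_add₀ hp t l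
  have hpow_add_two_mul : (p : ℚ_[p]) ^ (t + 2 * l) = p ^ t * (p ^ l) ^ 2 := by
    rw [zpow_add₀ hp, two_mul, zpow_add₀ hp, sq]
  rw [PadicInt.coe_units_inv] at hK ⊢
  rw [_root_.zpow_neg, hpow_add, hpow_add_two_mul,
    diag_mul_weyl_mul_upper_eq_scalar_mul_upper_mul_diag_mul_lower hv hq,
    hZ _ _ (neg_ne_zero.mpr (mul_ne_zero hv (inv_ne_zero hq))), hN, hK, mul_left_comm]

/-- If `W : GL₂(ℚ_p) → ℂ` transforms by `ψ_p` under left translation by `n(x)`, by a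
central character `ω` under the centre, and is right invariant under a subgroup
containing `[[v⁻²,0],[v⁻¹p^l,1]]`, then for `l ≥ 1` and `v ∈ ℤ_pˣ` one has
`W(g_{t,l,v}) = ψ_p(-v⁻¹p^{t+l})·ω(-v p^{-l})·W(a(p^{t+2l}))`. -/
theorem whittaker_value (p : ℕ) [Fact p.Prime] (t l : ℤ) (hl : 1 ≤ l) (v : ℤ_[p]ˣ)
    (W : Matrix (Fin 2) (Fin 2) ℚ_[p] → ℂ) (ψ : ℚ_[p] → ℂ) (ω : ℚ_[p] → ℂ)
    (hN : ∀ (x : ℚ_[p]) (g : Matrix (Fin 2) (Fin 2) ℚ_[p]),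
      W (!![1, x; 0, 1] * g) = ψ x * W g)
    (hZ : ∀ (lam : ℚ_[p]) (g : Matrix (Fin 2) (Fin 2) ℚ_[p]), lam ≠ 0 →
      W (Matrix.scalar (Fin 2) lam * g) = ω lam * W g)
    (hK : ∀ g : Matrix (Fin 2) (Fin 2) ℚ_[p],
      W (g * !![(((v⁻¹ : ℤ_[p]ˣ) : ℤ_[p]) : ℚ_[p]) ^ 2, 0;
                (((v⁻¹ : ℤ_[p]ˣ) : ℤ_[p]) : ℚ_[p]) * (p : ℚ_[p]) ^ l, 1]) = W g) :
    W (!![(p : ℚ_[p]) ^ t, 0; 0, 1] * !![0, 1; -1, 0] *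
        !![1, ((v : ℤ_[p]) : ℚ_[p]) * (p : ℚ_[p]) ^ (-l); 0, 1])
      = ψ (-(((v⁻¹ : ℤ_[p]ˣ) : ℤ_[p]) : ℚ_[p]) * (p : ℚ_[p]) ^ (t + l)) *
        (ω (-(((v : ℤ_[p]) : ℚ_[p]) * (p : ℚ_[p]) ^ (-l))) *
          W !![(p : ℚ_[p]) ^ (t + 2 * l), 0; 0, 1]) :=
  whittaker_value_general p t l v W ψ ω hN hZ hK
end
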